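/- arXiv:1609.08645 — 4 statements merged into one kernel-verified Lean document; each statement's English description precedes it below -/
import Mathlib

section
/- For any claw-free graph G, the chromatic number of the square of G satisfies χ(G²) ≤ 2ω(G)² − 2ω(G) + 1, where ω(G) is the clique number of G. -/
/-!
Greedy colouring reduces the claim to `Δ(G²) ≤ 2ω² - 2ω`. Fix `v`, with neighbourhood `N` and
second neighbourhood `N₂`. By claw-freeness, for every edge `xc` the neighbours of `x` not
adjacent to `c` form a clique with `x`; so each `x ∈ N` has fewer than `ω` non-neighbours in `N`
and fewer than `ω` neighbours in `N₂`. Covering `N` by a largest clique inside it and the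
non-neighbours of its vertices gives `|N| ≤ ω(ω - 1)`. Double counting the edges between `N` and
`N₂` gives `|N₂| t ≤ |N| (ω - 1)`, where every `w ∈ N₂` has at least `t` common neighbours with
`v`, while splitting `N` along a path `v x w` gives `|N| ≤ |N ∩ N(w)| + 2ω - 3`. These
inequalities combine to `|N| + |N₂| ≤ 2ω² - 2ω`.
-/

open SimpleGraph Finset

variable {V : Type*}

/-- A graph is claw-free if it has no induced `K_{1,3}`. -/
def ClawFree (G : SimpleGraph V) : Prop :=
  ∀ v a b c : V, G.Adj v a → G.Adj v b → G.Adj v c →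
    a ≠ b → a ≠ c → b ≠ c → G.Adj a b ∨ G.Adj a c ∨ G.Adj b c

/-- The square of a graph: join distinct vertices at distance at most 2. -/
def square (G : SimpleGraph V) : SimpleGraph V where
  Adj u w := u ≠ w ∧ (G.Adj u w ∨ ∃ x, G.Adj u x ∧ G.Adj x w)
  symm := by
    refine ⟨?_⟩
    rintro u w ⟨h1, h2⟩
    refine ⟨h1.symm, ?_⟩
    rcases h2 with h | ⟨x, hx1, hx2⟩
    · exact Or.inl h.symm
    · exact Or.inr ⟨x, hx2.symm, hx1.symm⟩
  loopless := ⟨fun u h => h.1 rfl⟩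

/-- The second neighbourhood of `v` : vertices at distance exactly two from `v`. -/
def secondNbhd (G : SimpleGraph V) (v : V) : Set V :=
  {w | w ≠ v ∧ ¬G.Adj v w ∧ ∃ x, G.Adj v x ∧ G.Adj x w}

/-- The square degree of a vertex. -/
noncomputable def sqDeg (G : SimpleGraph V) (v : V) : ℕ :=
  ((square G).neighborSet v).ncard

namespace SimpleGraph

variable {G : SimpleGraph V}

theorem exists_proper_on_of_forall_degree_lt [Fintype V] [DecidableEq V] [DecidableRel G.Adj]
    {n : ℕ} (hdeg : ∀ v, G.degree v < n) (s : Finset V) :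
    ∃ c : V → ℕ, (∀ a ∈ s, c a < n) ∧ ∀ a ∈ s, ∀ b ∈ s, G.Adj a b → c a ≠ c b := by
  induction s using Finset.induction_on with
  | empty => exact ⟨0, by simp, by simp⟩
  | insert a s ha ih =>
    obtain ⟨c, hlt, hc⟩ := ih
    have hfree : #((G.neighborFinset a).image c) < #(range n) := by
      rw [card_range]
      exact card_image_le.trans_lt (hdeg a)
    obtain ⟨i, hin, hi⟩ := exists_mem_notMem_of_card_lt_card hfree
    have hnbr : ∀ b, G.Adj a b → c b ≠ i := fun b hab hb =>
      hi (mem_image.2 ⟨b, (mem_neighborFinset G a b).2 hab, hb⟩)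
    refine ⟨Function.update c a i, ?_, ?_⟩
    · intro b hb
      rcases eq_or_ne b a with rfl | hba
      · simpa using hin
      · simpa [hba] using hlt b ((mem_insert.1 hb).resolve_left hba)
    · intro b hb b' hb' hbb'
      have hs : ∀ x ∈ insert a s, x ≠ a → x ∈ s := fun x hx hxa =>
        (mem_insert.1 hx).resolve_left hxa
      by_cases hba : b = a <;> by_cases hb'a : b' = a
      · exact absurd (hba ▸ hb'a ▸ hbb') G.irrefl
      · subst hba
        simpa [hb'a] using (hnbr b' hbb').symm
      · subst hb'a
        simpa [hba] using hnbr b hbb'.symm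
      · simpa [hba, hb'a] using hc b (hs b hb hba) b' (hs b' hb' hb'a) hbb'

theorem colorable_of_forall_degree_lt [Fintype V] [DecidableRel G.Adj] {n : ℕ}
    (hdeg : ∀ v, G.degree v < n) : G.Colorable n := by
  classical
  obtain ⟨c, hlt, hc⟩ := exists_proper_on_of_forall_degree_lt hdeg univ
  exact ⟨Coloring.mk (fun v => ⟨c v, hlt v (mem_univ v)⟩) fun hab h =>
    hc _ (mem_univ _) _ (mem_univ _) hab (Fin.val_eq_of_eq h)⟩

theorem card_add_one_le_cliqueNum_of_isClique_insert [Finite V] {s : Finset V} {v : V}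
    (h : G.IsClique (insert v (s : Set V))) (hv : v ∉ s) : #s + 1 ≤ G.cliqueNum := by
  classical
  rw [← card_insert_of_notMem hv]
  exact IsClique.card_le_cliqueNum (tc := by rwa [coe_insert])

theorem card_le_mul_of_card_nonadj_lt [DecidableEq V] [DecidableRel G.Adj]
    {s : Finset V} {p m : ℕ} (hnon : ∀ x ∈ s, #{z ∈ s | z ≠ x ∧ ¬G.Adj x z} < m)
    (hcl : ∀ t ⊆ s, G.IsClique (t : Set V) → #t ≤ p) : #s ≤ p * m := by
  classical
  set cliques := s.powerset.filter fun t : Finset V => G.IsClique (t : Set V)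
  obtain ⟨A, hA, hmax⟩ := exists_max_image cliques card ⟨∅, by simp [cliques]⟩
  rw [mem_filter, mem_powerset] at hA
  have hcover : s ⊆ A.biUnion fun x => insert x {z ∈ s | z ≠ x ∧ ¬G.Adj x z} := by
    intro u hu
    by_contra hnot
    simp only [mem_biUnion, mem_insert, mem_filter, not_exists, not_and, not_or,
      not_not] at hnot
    have huA : u ∉ A := fun h => (hnot u h).1 rfl
    have hins : insert u A ∈ cliques := by
      rw [mem_filter, mem_powerset, coe_insert]
      exact ⟨insert_subset hu hA.1, hA.2.insert fun x hx hux =>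
        ((hnot x hx).2 hu hux).symm⟩
    have := hmax _ hins
    rw [card_insert_of_notMem huA] at this
    omega
  calc #s ≤ ∑ x ∈ A, #(insert x {z ∈ s | z ≠ x ∧ ¬G.Adj x z}) :=
        (card_le_card hcover).trans card_biUnion_le
    _ ≤ ∑ _x ∈ A, m := sum_le_sum fun x hx =>
        (card_insert_le _ _).trans (hnon x (hA.1 hx))
    _ = #A * m := by rw [sum_const, smul_eq_mul]
    _ ≤ p * m := Nat.mul_le_mul_right m (hcl A hA.1 hA.2)

end SimpleGraph

/-- Read `d = |N(v)|`, `s = |N₂(v)|`, and `t` a lower bound on the number of common neighbours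
of `v` and a vertex of `N₂(v)`. -/
theorem add_add_two_mul_le_of_mul_le {d s t k : ℕ} (hd : d + 3 ≤ t + 2 * k)
    (hdk : d + k ≤ k * k) (hst : s * t + d ≤ d * k) (ht : 1 ≤ t) :
    d + s + 2 * k ≤ 2 * (k * k) := by
  zify at *
  rcases le_or_gt (k : ℤ) (t + 1) with hkt | htk
  · have hsd : (s : ℤ) * t ≤ d * t := by nlinarith
    have := le_of_mul_le_mul_right hsd (by linarith)
    linarith
  · have h1 : (0 : ℤ) ≤ (t - 1) * (2 * k * k - 5 * k + 3 - t) :=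
      mul_nonneg (by linarith) (by nlinarith)
    have h2 : (d : ℤ) * (t + k - 1) ≤ (t + 2 * k - 3) * (t + k - 1) :=
      mul_le_mul_of_nonneg_right (by linarith) (by linarith)
    nlinarith

theorem mem_secondNbhd_iff {G : SimpleGraph V} {v w : V} :
    w ∈ secondNbhd G v ↔ (square G).Adj v w ∧ ¬G.Adj v w := by
  constructor
  · rintro ⟨hwv, hvw, hpath⟩
    exact ⟨⟨hwv.symm, Or.inr hpath⟩, hvw⟩
  · rintro ⟨⟨hvw, hadj | hpath⟩, hnadj⟩
    · exact absurd hadj hnadj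
    · exact ⟨hvw.symm, hnadj, hpath⟩

namespace ClawFree

variable {G : SimpleGraph V}

theorem isClique_nonadj (hG : ClawFree G) {x c : V} (hxc : G.Adj x c) :
    G.IsClique {a | G.Adj x a ∧ a ≠ c ∧ ¬G.Adj c a} := by
  rintro a ⟨hxa, hac, hca⟩ b ⟨hxb, hbc, hcb⟩ hab
  rcases hG x a b c hxa hxb hxc hab hac hbc with h | h | h
  · exact h
  · exact absurd h.symm hca
  · exact absurd h.symm hcb

variable [Fintype V] [DecidableEq V] [DecidableRel G.Adj]

theorem card_nonadj_lt_cliqueNum (hG : ClawFree G) {x c : V} (hxc : G.Adj x c) :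
    #{a ∈ G.neighborFinset x | a ≠ c ∧ ¬G.Adj c a} < G.cliqueNum := by
  refine card_add_one_le_cliqueNum_of_isClique_insert (v := x) ?_ (by simp)
  refine ((hG.isClique_nonadj hxc).subset ?_).insert ?_
  · intro a
    simp
  · intro a ha _
    simp_all

theorem card_nonadj_inter_add_two_le_cliqueNum (hG : ClawFree G) {v x w : V}
    (hvx : G.Adj v x) (hxw : G.Adj x w) :
    #{a ∈ G.neighborFinset x ∩ G.neighborFinset v | a ≠ w ∧ ¬G.Adj w a} + 2 ≤
      G.cliqueNum := by
  have hv : v ∉ G.neighborFinset x ∩ G.neighborFinset v := by simp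
  have := card_add_one_le_cliqueNum_of_isClique_insert (G := G) (v := x)
    (s := insert v {a ∈ G.neighborFinset x ∩ G.neighborFinset v | a ≠ w ∧ ¬G.Adj w a}) ?_ ?_
  · rwa [card_insert_of_notMem fun h => hv (mem_filter.1 h).1] at this
  · rw [coe_insert]
    refine (((hG.isClique_nonadj hxw).subset ?_).insert ?_).insert ?_
    · intro a
      simp_all
    · intro a ha _
      simp_all
    · intro a ha _
      obtain rfl | ha := Set.mem_insert_iff.1 ha
      · exact hvx.symm
      · simp_all
  · simp [hvx.ne', hvx]

theorem card_neighborFinset_add_cliqueNum_le (hG : ClawFree G) (v : V) :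
    #(G.neighborFinset v) + G.cliqueNum ≤ G.cliqueNum * G.cliqueNum := by
  have hN : #(G.neighborFinset v) ≤ (G.cliqueNum - 1) * G.cliqueNum := by
    refine card_le_mul_of_card_nonadj_lt (G := G) (fun x hx => ?_) fun t ht hcl => ?_
    · exact hG.card_nonadj_lt_cliqueNum ((G.mem_neighborFinset v x).1 hx)
    · have hclv : G.IsClique (insert v (t : Set V)) :=
        hcl.insert fun a ha _ => (G.mem_neighborFinset v a).1 (ht ha)
      have := card_add_one_le_cliqueNum_of_isClique_insert hclv fun hv =>
        G.irrefl ((G.mem_neighborFinset v v).1 (ht hv))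
      omega
  rw [Nat.sub_one_mul] at hN
  have := Nat.le_mul_self G.cliqueNum
  omega

theorem card_neighborFinset_add_three_le (hG : ClawFree G) {v w x : V} (hvw : ¬G.Adj v w)
    (hvx : G.Adj v x) (hxw : G.Adj x w) :
    #(G.neighborFinset v) + 3 ≤ #{y ∈ G.neighborFinset v | G.Adj y w} + 2 * G.cliqueNum := by
  have hD := hG.card_nonadj_inter_add_two_le_cliqueNum hvx hxw
  have hE := hG.card_nonadj_lt_cliqueNum hvx
  set T := {y ∈ G.neighborFinset v | G.Adj y w}
  set D := {a ∈ G.neighborFinset x ∩ G.neighborFinset v | a ≠ w ∧ ¬G.Adj w a}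
  set E := {a ∈ G.neighborFinset v | a ≠ x ∧ ¬G.Adj x a}
  have hcover : G.neighborFinset v ⊆ T ∪ (D ∪ E) := by
    intro z hz
    have hvz := (G.mem_neighborFinset v z).1 hz
    simp only [T, D, E, mem_union, mem_filter, mem_inter, mem_neighborFinset]
    by_cases hzw : G.Adj z w
    · exact Or.inl ⟨hvz, hzw⟩
    by_cases hxz : G.Adj x z
    · exact Or.inr (Or.inl ⟨⟨hxz, hvz⟩, fun h => hvw (h ▸ hvz), fun h => hzw h.symm⟩)
    · exact Or.inr (Or.inr ⟨hvz, fun h => hzw (h ▸ hxw), hxz⟩)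
  have := (card_le_card hcover).trans (card_union_le T (D ∪ E))
  have := card_union_le D E
  omega

theorem sum_card_commonNeighbors_add_le (hG : ClawFree G) {v : V} {S : Finset V}
    (hS : ∀ w ∈ S, w ≠ v ∧ ¬G.Adj v w) :
    ∑ w ∈ S, #{x ∈ G.neighborFinset v | G.Adj x w} + #(G.neighborFinset v) ≤
      #(G.neighborFinset v) * G.cliqueNum := by
  have hdouble := sum_card_bipartiteAbove_eq_sum_card_bipartiteBelow (r := G.Adj)
    (s := G.neighborFinset v) (t := S)
  simp only [bipartiteAbove, bipartiteBelow] at hdouble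
  rw [← hdouble]
  calc ∑ x ∈ G.neighborFinset v, #{w ∈ S | G.Adj x w} + #(G.neighborFinset v)
      = ∑ x ∈ G.neighborFinset v, (#{w ∈ S | G.Adj x w} + 1) := by
        rw [sum_add_distrib, card_eq_sum_ones]
    _ ≤ ∑ _x ∈ G.neighborFinset v, G.cliqueNum := sum_le_sum fun x hx => by
        refine Nat.succ_le_of_lt ((card_le_card fun w hw => ?_).trans_lt
          (hG.card_nonadj_lt_cliqueNum ((G.mem_neighborFinset v x).1 hx).symm))
        rw [mem_filter] at hw ⊢
        exact ⟨(G.mem_neighborFinset x w).2 hw.2, hS w hw.1⟩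
    _ = #(G.neighborFinset v) * G.cliqueNum := by rw [sum_const, smul_eq_mul]

theorem degree_square_add_two_mul_cliqueNum_le [DecidableRel (square G).Adj] (hG : ClawFree G)
    (v : V) : (square G).degree v + 2 * G.cliqueNum ≤ 2 * (G.cliqueNum * G.cliqueNum) := by
  set S := (square G).neighborFinset v \ G.neighborFinset v
  have hNS : (square G).degree v = #(G.neighborFinset v) + #S := by
    have hsub : G.neighborFinset v ⊆ (square G).neighborFinset v := fun w hw => by
      simp only [mem_neighborFinset] at hw ⊢
      exact ⟨hw.ne, Or.inl hw⟩
    rw [← card_neighborFinset_eq_degree, ← card_sdiff_add_card_eq_card hsub, add_comm]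
  have hS : ∀ w ∈ S, w ∈ secondNbhd G v := fun w hw => by
    rw [mem_sdiff, mem_neighborFinset, mem_neighborFinset] at hw
    exact mem_secondNbhd_iff.2 hw
  set t := max 1 (#(G.neighborFinset v) + 3 - 2 * G.cliqueNum)
  have ht : ∀ w ∈ S, t ≤ #{x ∈ G.neighborFinset v | G.Adj x w} := fun w hw => by
    obtain ⟨-, hvw, x, hvx, hxw⟩ := hS w hw
    have := hG.card_neighborFinset_add_three_le hvw hvx hxw
    have : 0 < #{x ∈ G.neighborFinset v | G.Adj x w} :=
      card_pos.2 ⟨x, mem_filter.2 ⟨(G.mem_neighborFinset v x).2 hvx, hxw⟩⟩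
    omega
  have hsum := hG.sum_card_commonNeighbors_add_le fun w hw => ⟨(hS w hw).1, (hS w hw).2.1⟩
  have hst := card_nsmul_le_sum S _ t ht
  rw [smul_eq_mul] at hst
  rw [hNS]
  exact add_add_two_mul_le_of_mul_le (t := t) (by omega)
    (hG.card_neighborFinset_add_cliqueNum_le v) (by omega) (by omega)

end ClawFree

theorem stmt_1 [Fintype V] (G : SimpleGraph V) (hG : ClawFree G) :
    (square G).chromaticNumber ≤
      ((2 * G.cliqueNum ^ 2 - 2 * G.cliqueNum + 1 : ℕ) : ℕ∞) := by
  classical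
  refine (SimpleGraph.colorable_of_forall_degree_lt fun v => ?_).chromaticNumber_le
  have := hG.degree_square_add_two_mul_cliqueNum_le v
  rw [sq]
  omega
end

section
/- Let F be a multigraph with maximum degree Δ and let e = u₁u₂ be an edge of F. Let A = N(u₁) \ {u₂}, B = N(u₂) \ {u₁}, M the set of edges parallel to e between u₁ and u₂, and for i ≥ 1 let Λ_i be the set of vertices a ∈ A ∪ B with exactly i edges to {u₁, u₂}. If F is Δ-regular, then the degree of e in the square of the line graph of F equals 2Δ(Δ−1) − (|E(A ∪ B)| + (2Δ−1)|M| + Σ_{i=2}^{Δ} (i−1)Δ|Λ_i|), where |E(A ∪ B)| is the number of edges of F with both endpoints in A ∪ B. -/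
open Finset

/-- In a multigraph given by an edge type `E` with endpoint map `ends`,
two edges share an endpoint. -/
def Share {V E : Type*} (ends : E → Sym2 V) (e f : E) : Prop :=
  ∃ v : V, v ∈ ends e ∧ v ∈ ends f

/-- The degree of a vertex in a multigraph. -/
noncomputable def mDeg {V E : Type*} (ends : E → Sym2 V) (v : V) : ℕ :=
  Set.ncard {e : E | v ∈ ends e}

/-- The degree of an edge `e` in the square of the line graph of the multigraph:
the number of other edges sharing an endpoint with `e` or with an edge
sharing an endpoint with `e`. -/
noncomputable def lineSqDeg {V E : Type*} (ends : E → Sym2 V) (e : E) : ℕ :=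
  Set.ncard {f : E | f ≠ e ∧ (Share ends e f ∨ ∃ g : E, Share ends e g ∧ Share ends g f)}

lemma ncard_setOf_eq_card_filter {E : Type*} [Fintype E] (p : E → Prop) [DecidablePred p] :
    Set.ncard {x | p x} = (univ.filter p).card := by
  rw [Set.ncard_eq_toFinset_card', Set.toFinset_setOf]

lemma sym2_exists {V : Type*} (z : Sym2 V) : ∃ x y, z = s(x,y) := by
  induction z using Sym2.ind with | _ x y => exact ⟨x, y, rfl⟩

theorem stmt_11 {V E : Type*} [Fintype V] [Fintype E] [DecidableEq V]
    (ends : E → Sym2 V) (hloopless : ∀ e : E, ¬(ends e).IsDiag)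
    (Δ : ℕ) (hreg : ∀ v : V, mDeg ends v = Δ)
    (e : E) (u₁ u₂ : V) (hu : u₁ ≠ u₂) (he : ends e = s(u₁, u₂))
    (A B M Λ : _)
    (hA : A = {v : V | v ≠ u₂ ∧ ∃ f : E, ends f = s(u₁, v)})
    (hB : B = {v : V | v ≠ u₁ ∧ ∃ f : E, ends f = s(u₂, v)})
    (hM : M = {f : E | f ≠ e ∧ ends f = s(u₁, u₂)})
    (hΛ : Λ = fun i : ℕ => {a ∈ A ∪ B |
      Set.ncard {f : E | ends f = s(a, u₁) ∨ ends f = s(a, u₂)} = i}) :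
    lineSqDeg ends e +
        (Set.ncard {f : E | ∀ v ∈ ends f, v ∈ A ∪ B} +
          (2 * Δ - 1) * Set.ncard M +
          ∑ i ∈ Finset.Icc 2 Δ, (i - 1) * Δ * Set.ncard (Λ i)) =
      2 * Δ * (Δ - 1) := by
  classical
  -- nondegenerate endpoints of any edge
  have hends : ∀ f : E, ∃ x y, x ≠ y ∧ ends f = s(x, y) := by
    intro f
    obtain ⟨x, y, h⟩ := sym2_exists (ends f)
    exact ⟨x, y, fun hxy => hloopless f (by rw [h, hxy]; exact Sym2.mk_isDiag_iff.2 rfl), h⟩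
  -- u₁, u₂ are not in A ∪ B
  have hu1 : u₁ ∉ A ∪ B := by
    rintro (h | h)
    · rw [hA] at h
      obtain ⟨-, f, hf⟩ := h
      exact hloopless f (by rw [hf]; exact Sym2.mk_isDiag_iff.2 rfl)
    · rw [hB] at h
      exact h.1 rfl
  have hu2 : u₂ ∉ A ∪ B := by
    rintro (h | h)
    · rw [hA] at h
      exact h.1 rfl
    · rw [hB] at h
      obtain ⟨-, f, hf⟩ := h
      exact hloopless f (by rw [hf]; exact Sym2.mk_isDiag_iff.2 rfl)
  -- degrees as filter-cards
  have hdeg : ∀ v : V, (univ.filter (fun f : E => v ∈ ends f)).card = Δ := by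
    intro v
    rw [← ncard_setOf_eq_card_filter]
    exact hreg v
  -- abbreviations
  set t1 := (univ.filter (fun f : E => f ≠ e ∧ (u₁ ∈ ends f ∨ u₂ ∈ ends f))).card with ht1
  set t2 := (univ.filter (fun f : E => u₁ ∉ ends f ∧ u₂ ∉ ends f ∧ ∃ v ∈ ends f, v ∈ A ∪ B)).card with ht2
  set m := (univ.filter (fun f : E => f ≠ e ∧ ends f = s(u₁, u₂))).card with hm
  set Eab := (univ.filter (fun f : E => ∀ v ∈ ends f, v ∈ A ∪ B)).card with hEab
  set d : V → ℕ := fun a => (univ.filter (fun f : E => ends f = s(a, u₁) ∨ ends f = s(a, u₂))).card with hd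
  set T : Finset V := univ.filter (fun a => a ∈ A ∪ B) with hT
  -- an edge with both u₁ u₂ as endpoints is e or in M
  have hbothmem : ∀ f : E, (u₁ ∈ ends f ∧ u₂ ∈ ends f) ↔ ends f = s(u₁, u₂) :=
    fun f => Sym2.mem_and_mem_iff hu
  -- ### Equation 1 : t1 + m + 2 = 2 * Δ
  have hE1 : t1 + m + 2 = 2 * Δ := by
    have hsplit := Finset.card_filter_add_card_filter_not
      (s := univ.filter (fun f : E => u₁ ∈ ends f) ∪ univ.filter (fun f : E => u₂ ∈ ends f))
      (p := fun f : E => f = e)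
    have hinter : (univ.filter (fun f : E => u₁ ∈ ends f) ∩ univ.filter (fun f : E => u₂ ∈ ends f))
        = insert e (univ.filter (fun f : E => f ≠ e ∧ ends f = s(u₁, u₂))) := by
      ext f
      simp only [mem_inter, mem_filter, mem_univ, true_and, mem_insert]
      rw [hbothmem f]
      constructor
      · intro h
        by_cases hfe : f = e
        · exact Or.inl hfe
        · exact Or.inr ⟨hfe, h⟩
      · rintro (rfl | ⟨-, h⟩)
        · exact he
        · exact h
    have hcard2 : (univ.filter (fun f : E => u₁ ∈ ends f) ∩ univ.filter (fun f : E => u₂ ∈ ends f)).card = m + 1 := by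
      rw [hinter, card_insert_of_notMem (by simp), hm]
    have hiu := Finset.card_union_add_card_inter
      (univ.filter (fun f : E => u₁ ∈ ends f)) (univ.filter (fun f : E => u₂ ∈ ends f))
    rw [hdeg u₁, hdeg u₂, hcard2] at hiu
    -- now split union by f = e
    have hfeq : ((univ.filter (fun f : E => u₁ ∈ ends f) ∪ univ.filter (fun f : E => u₂ ∈ ends f)).filter (fun f => f = e)) = {e} := by
      ext f
      simp only [mem_filter, mem_union, mem_filter, mem_univ, true_and, mem_singleton]
      constructor
      · exact fun h => h.2
      · rintro rfl
        exact ⟨Or.inl (by rw [he]; simp), rfl⟩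
    have hfne : ((univ.filter (fun f : E => u₁ ∈ ends f) ∪ univ.filter (fun f : E => u₂ ∈ ends f)).filter (fun f => ¬ f = e)).card = t1 := by
      rw [ht1]
      congr 1
      ext f
      simp only [mem_filter, mem_union, mem_univ, true_and]
      tauto
    rw [hfeq, hfne, card_singleton] at hsplit
    omega
  -- ### i1, i2
  set i1 := (univ.filter (fun f : E => u₁ ∈ ends f ∧ u₂ ∉ ends f)).card with hi1
  set i2 := (univ.filter (fun f : E => u₂ ∈ ends f ∧ u₁ ∉ ends f)).card with hi2
  have hI1 : i1 + (m + 1) = Δ := by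
    have hsplit := Finset.card_filter_add_card_filter_not
      (s := univ.filter (fun f : E => u₁ ∈ ends f)) (p := fun f : E => u₂ ∈ ends f)
    have h1 : ((univ.filter (fun f : E => u₁ ∈ ends f)).filter (fun f => u₂ ∈ ends f)).card = m + 1 := by
      have : ((univ.filter (fun f : E => u₁ ∈ ends f)).filter (fun f => u₂ ∈ ends f))
          = insert e (univ.filter (fun f : E => f ≠ e ∧ ends f = s(u₁, u₂))) := by
        ext f
        simp only [mem_filter, mem_univ, true_and, mem_insert, and_assoc]
        rw [show (u₁ ∈ ends f ∧ u₂ ∈ ends f) ↔ ends f = s(u₁,u₂) from hbothmem f]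
        constructor
        · intro h
          by_cases hfe : f = e
          · exact Or.inl hfe
          · exact Or.inr ⟨hfe, h⟩
        · rintro (rfl | ⟨-, h⟩)
          · exact he
          · exact h
      rw [this, card_insert_of_notMem (by simp), hm]
    have h2 : ((univ.filter (fun f : E => u₁ ∈ ends f)).filter (fun f => ¬ u₂ ∈ ends f)) = univ.filter (fun f : E => u₁ ∈ ends f ∧ u₂ ∉ ends f) := by
      rw [filter_filter]
    rw [h1, h2, hdeg u₁] at hsplit
    rw [hi1]
    omega
  have hI2 : i2 + (m + 1) = Δ := by
    have hsplit := Finset.card_filter_add_card_filter_not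
      (s := univ.filter (fun f : E => u₂ ∈ ends f)) (p := fun f : E => u₁ ∈ ends f)
    have h1 : ((univ.filter (fun f : E => u₂ ∈ ends f)).filter (fun f => u₁ ∈ ends f)).card = m + 1 := by
      have : ((univ.filter (fun f : E => u₂ ∈ ends f)).filter (fun f => u₁ ∈ ends f))
          = insert e (univ.filter (fun f : E => f ≠ e ∧ ends f = s(u₁, u₂))) := by
        ext f
        simp only [mem_filter, mem_univ, true_and, mem_insert, and_assoc]
        constructor
        · rintro ⟨h2, h1⟩
          have := (hbothmem f).1 ⟨h1, h2⟩
          by_cases hfe : f = e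
          · exact Or.inl hfe
          · exact Or.inr ⟨hfe, this⟩
        · rintro (rfl | ⟨-, h⟩)
          · rw [he]; simp
          · rw [h]; simp
      rw [this, card_insert_of_notMem (by simp), hm]
    have h2 : ((univ.filter (fun f : E => u₂ ∈ ends f)).filter (fun f => ¬ u₁ ∈ ends f)) = univ.filter (fun f : E => u₂ ∈ ends f ∧ u₁ ∉ ends f) := by
      rw [filter_filter]
    rw [h1, h2, hdeg u₂] at hsplit
    rw [hi2]
    omega
  have hΔpos : 1 ≤ Δ := by omega
  -- ### membership in A∪B from an edge to u₁ resp u₂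
  have hmemA : ∀ (a : V) (f : E), a ≠ u₂ → ends f = s(u₁, a) → a ∈ A ∪ B := by
    intro a f ha hf
    exact Or.inl (by rw [hA]; exact ⟨ha, f, hf⟩)
  have hmemB : ∀ (a : V) (f : E), a ≠ u₁ → ends f = s(u₂, a) → a ∈ A ∪ B := by
    intro a f ha hf
    exact Or.inr (by rw [hB]; exact ⟨ha, f, hf⟩)
  -- ### F3 : i1 + i2 = ∑ a in T, d a
  have hF3 : (∑ a ∈ T, d a) = i1 + i2 := by
    have perf : ∀ f : E, (T.filter (fun a => ends f = s(a, u₁) ∨ ends f = s(a, u₂))).card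
        = (if (u₁ ∈ ends f ∧ u₂ ∉ ends f) ∨ (u₂ ∈ ends f ∧ u₁ ∉ ends f) then 1 else 0) := by
      intro f
      by_cases hc : (u₁ ∈ ends f ∧ u₂ ∉ ends f) ∨ (u₂ ∈ ends f ∧ u₁ ∉ ends f)
      · rw [if_pos hc]
        rcases hc with ⟨h1, h2⟩ | ⟨h1, h2⟩
        · obtain ⟨w, hw⟩ := Sym2.mem_iff_exists.1 h1
          have hwu2 : w ≠ u₂ := fun h => h2 (by rw [hw, h]; simp)
          have hwAB : w ∈ A ∪ B := hmemA w f hwu2 hw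
          have : T.filter (fun a => ends f = s(a, u₁) ∨ ends f = s(a, u₂)) = {w} := by
            ext a
            simp only [mem_filter, hT, mem_univ, true_and, mem_singleton]
            constructor
            · rintro ⟨haAB, h | h⟩
              · rw [hw] at h
                rcases Sym2.eq_iff.1 h with ⟨h3, h4⟩ | ⟨h3, h4⟩
                · cases h3
                  exact absurd haAB hu1
                · exact h4.symm
              · exact absurd (by rw [h]; simp) h2
            · rintro rfl
              exact ⟨hwAB, Or.inl (by rw [hw, Sym2.eq_swap])⟩
          rw [this, card_singleton]
        · obtain ⟨w, hw⟩ := Sym2.mem_iff_exists.1 h1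
          have hwu1 : w ≠ u₁ := fun h => h2 (by rw [hw, h]; simp)
          have hwAB : w ∈ A ∪ B := hmemB w f hwu1 hw
          have : T.filter (fun a => ends f = s(a, u₁) ∨ ends f = s(a, u₂)) = {w} := by
            ext a
            simp only [mem_filter, hT, mem_univ, true_and, mem_singleton]
            constructor
            · rintro ⟨haAB, h | h⟩
              · exact absurd (by rw [h]; simp) h2
              · rw [hw] at h
                rcases Sym2.eq_iff.1 h with ⟨h3, h4⟩ | ⟨h3, h4⟩
                · cases h3
                  exact absurd haAB hu2
                · exact h4.symm
            · rintro rfl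
              exact ⟨hwAB, Or.inr (by rw [hw, Sym2.eq_swap])⟩
          rw [this, card_singleton]
      · rw [if_neg hc]
        rw [Finset.card_eq_zero, Finset.filter_eq_empty_iff]
        intro a ha
        rw [hT, mem_filter] at ha
        push_neg at hc
        rintro (h | h)
        · have h1 : u₁ ∈ ends f := by rw [h]; simp
          have h2 : u₂ ∈ ends f := hc.1 h1
          rw [h, Sym2.mem_iff] at h2
          rcases h2 with h2 | h2
          · exact hu2 (h2 ▸ ha.2)
          · exact hu h2.symm
        · have h1 : u₂ ∈ ends f := by rw [h]; simp
          have h2 : u₁ ∈ ends f := hc.2 h1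
          rw [h, Sym2.mem_iff] at h2
          rcases h2 with h2 | h2
          · exact hu1 (h2 ▸ ha.2)
          · exact hu h2
    calc (∑ a ∈ T, d a)
        = ∑ a ∈ T, ∑ f : E, (if ends f = s(a, u₁) ∨ ends f = s(a, u₂) then 1 else 0) := by
          apply Finset.sum_congr rfl
          intro a _
          rw [hd]
          exact Finset.card_filter _ _
      _ = ∑ f : E, ∑ a ∈ T, (if ends f = s(a, u₁) ∨ ends f = s(a, u₂) then 1 else 0) :=
          Finset.sum_comm
      _ = ∑ f : E, (T.filter (fun a => ends f = s(a, u₁) ∨ ends f = s(a, u₂))).card := by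
          apply Finset.sum_congr rfl
          intro f _
          exact (Finset.card_filter _ _).symm
      _ = ∑ f : E, (if (u₁ ∈ ends f ∧ u₂ ∉ ends f) ∨ (u₂ ∈ ends f ∧ u₁ ∉ ends f) then 1 else 0) :=
          Finset.sum_congr rfl (fun f _ => perf f)
      _ = (univ.filter (fun f : E => (u₁ ∈ ends f ∧ u₂ ∉ ends f) ∨ (u₂ ∈ ends f ∧ u₁ ∉ ends f))).card :=
          (Finset.card_filter _ _).symm
      _ = i1 + i2 := by
          rw [Finset.filter_or, Finset.card_union_of_disjoint (by
            rw [Finset.disjoint_left]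
            intro f hf1 hf2
            simp only [mem_filter] at hf1 hf2
            exact hf1.2.2 hf2.2.1)]
  -- ### d a bounds on T
  have hdmem : ∀ a ∈ T, d a ∈ Finset.Icc 1 Δ := by
    intro a ha
    rw [hT, mem_filter] at ha
    rw [mem_Icc]
    constructor
    · rw [hd]
      rw [Nat.one_le_iff_ne_zero, ← Nat.pos_iff_ne_zero, Finset.card_pos]
      rcases ha.2 with h | h
      · rw [hA] at h
        obtain ⟨-, f, hf⟩ := h
        exact ⟨f, by simp [Sym2.eq_swap, hf]⟩
      · rw [hB] at h
        obtain ⟨-, f, hf⟩ := h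
        exact ⟨f, by simp [Sym2.eq_swap, hf]⟩
    · rw [hd]
      calc (univ.filter (fun f : E => ends f = s(a, u₁) ∨ ends f = s(a, u₂))).card
          ≤ (univ.filter (fun f : E => a ∈ ends f)).card := by
            apply Finset.card_le_card
            intro f hf
            simp only [mem_filter, mem_univ, true_and] at hf ⊢
            rcases hf with h | h <;> rw [h] <;> simp
        _ = Δ := hdeg a
  -- ### F4 : ∑ a in T, d a = ∑ i in Icc 1 Δ, i * (fiber card)
  have hF4 : (∑ a ∈ T, d a) = ∑ i ∈ Finset.Icc 1 Δ, i * (T.filter (fun a => d a = i)).card := by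
    rw [← Finset.sum_fiberwise_of_maps_to hdmem d]
    apply Finset.sum_congr rfl
    intro i _
    rw [Finset.sum_congr rfl (fun a ha => (mem_filter.1 ha).2), Finset.sum_const, smul_eq_mul, mul_comm]
  -- ### F5 : T.card = ∑ fibers
  have hF5 : T.card = ∑ i ∈ Finset.Icc 1 Δ, (T.filter (fun a => d a = i)).card :=
    Finset.card_eq_sum_card_fiberwise hdmem
  -- ### handshake : Δ * T.card = (i1 + i2 + t2) + Eab
  have hE2 : Δ * T.card = (i1 + i2 + t2) + Eab := by
    have perf : ∀ f : E, (T.filter (fun a => a ∈ ends f)).card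
        = (if (∃ v ∈ ends f, v ∈ A ∪ B) then 1 else 0)
          + (if (∀ v ∈ ends f, v ∈ A ∪ B) then 1 else 0) := by
      intro f
      obtain ⟨x, y, hxy, hf⟩ := hends f
      have hxf : x ∈ ends f := by rw [hf]; simp
      have hyf : y ∈ ends f := by rw [hf]; simp
      by_cases hx : x ∈ A ∪ B <;> by_cases hy : y ∈ A ∪ B
      · have h1 : T.filter (fun a => a ∈ ends f) = {x, y} := by
          ext a
          simp only [mem_filter, hT, mem_univ, true_and, mem_insert, mem_singleton, hf,
            Sym2.mem_iff]
          constructor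
          · exact fun h => h.2
          · rintro (rfl | rfl)
            · exact ⟨hx, Or.inl rfl⟩
            · exact ⟨hy, Or.inr rfl⟩
        rw [h1, Finset.card_insert_of_notMem (by simpa using hxy), card_singleton,
          if_pos ⟨x, hxf, hx⟩, if_pos ?_]
        intro v hv
        rw [hf, Sym2.mem_iff] at hv
        rcases hv with rfl | rfl
        · exact hx
        · exact hy
      · have h1 : T.filter (fun a => a ∈ ends f) = {x} := by
          ext a
          simp only [mem_filter, hT, mem_univ, true_and, mem_singleton, hf, Sym2.mem_iff]
          constructor
          · rintro ⟨ha, rfl | rfl⟩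
            · rfl
            · exact absurd ha hy
          · rintro rfl
            exact ⟨hx, Or.inl rfl⟩
        rw [h1, card_singleton, if_pos ⟨x, hxf, hx⟩, if_neg (fun h => hy (h y hyf))]
      · have h1 : T.filter (fun a => a ∈ ends f) = {y} := by
          ext a
          simp only [mem_filter, hT, mem_univ, true_and, mem_singleton, hf, Sym2.mem_iff]
          constructor
          · rintro ⟨ha, rfl | rfl⟩
            · exact absurd ha hx
            · rfl
          · rintro rfl
            exact ⟨hy, Or.inr rfl⟩
        rw [h1, card_singleton, if_pos ⟨y, hyf, hy⟩, if_neg (fun h => hx (h x hxf))]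
      · have h1 : T.filter (fun a => a ∈ ends f) = ∅ := by
          rw [Finset.filter_eq_empty_iff]
          intro a ha hae
          rw [hT, mem_filter] at ha
          rw [hf, Sym2.mem_iff] at hae
          rcases hae with rfl | rfl
          · exact hx ha.2
          · exact hy ha.2
        rw [h1, Finset.card_empty, if_neg ?_, if_neg (fun h => hx (h x hxf))]
        rintro ⟨v, hv, hvAB⟩
        rw [hf, Sym2.mem_iff] at hv
        rcases hv with rfl | rfl
        · exact hx hvAB
        · exact hy hvAB
    have hsplitQ : (univ.filter (fun f : E => ∃ v ∈ ends f, v ∈ A ∪ B)).card = i1 + i2 + t2 := by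
      have hiff : ∀ f : E, (∃ v ∈ ends f, v ∈ A ∪ B) ↔
          ((u₁ ∈ ends f ∧ u₂ ∉ ends f) ∨ ((u₂ ∈ ends f ∧ u₁ ∉ ends f) ∨
            (u₁ ∉ ends f ∧ u₂ ∉ ends f ∧ ∃ v ∈ ends f, v ∈ A ∪ B))) := by
        intro f
        constructor
        · rintro ⟨v, hv, hvAB⟩
          by_cases h1 : u₁ ∈ ends f <;> by_cases h2 : u₂ ∈ ends f
          · exfalso
            have := (hbothmem f).1 ⟨h1, h2⟩
            rw [this, Sym2.mem_iff] at hv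
            rcases hv with rfl | rfl
            · exact hu1 hvAB
            · exact hu2 hvAB
          · exact Or.inl ⟨h1, h2⟩
          · exact Or.inr (Or.inl ⟨h2, h1⟩)
          · exact Or.inr (Or.inr ⟨h1, h2, v, hv, hvAB⟩)
        · rintro (⟨h1, h2⟩ | ⟨h1, h2⟩ | ⟨h1, h2, h3⟩)
          · obtain ⟨w, hw⟩ := Sym2.mem_iff_exists.1 h1
            have hwu2 : w ≠ u₂ := fun h => h2 (by rw [hw, h]; simp)
            exact ⟨w, by rw [hw]; simp, hmemA w f hwu2 hw⟩
          · obtain ⟨w, hw⟩ := Sym2.mem_iff_exists.1 h1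
            have hwu1 : w ≠ u₁ := fun h => h2 (by rw [hw, h]; simp)
            exact ⟨w, by rw [hw]; simp, hmemB w f hwu1 hw⟩
          · exact h3
      have hd23 : Disjoint
          (univ.filter (fun f : E => u₂ ∈ ends f ∧ u₁ ∉ ends f))
          (univ.filter (fun f : E => u₁ ∉ ends f ∧ u₂ ∉ ends f ∧ ∃ v ∈ ends f, v ∈ A ∪ B)) := by
        rw [Finset.disjoint_left]
        intro f hf1 hf2
        simp only [mem_filter] at hf1 hf2
        exact hf2.2.2.1 hf1.2.1
      have hd123 : Disjoint
          (univ.filter (fun f : E => u₁ ∈ ends f ∧ u₂ ∉ ends f))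
          ((univ.filter (fun f : E => u₂ ∈ ends f ∧ u₁ ∉ ends f)) ∪
            (univ.filter (fun f : E => u₁ ∉ ends f ∧ u₂ ∉ ends f ∧ ∃ v ∈ ends f, v ∈ A ∪ B))) := by
        rw [Finset.disjoint_left]
        intro f hf1 hf2
        rw [Finset.mem_union] at hf2
        simp only [mem_filter] at hf1 hf2
        rcases hf2 with hf2 | hf2
        · exact hf2.2.2 hf1.2.1
        · exact hf2.2.1 hf1.2.1
      rw [Finset.filter_congr (fun f _ => hiff f), Finset.filter_or, Finset.filter_or,
        Finset.card_union_of_disjoint hd123, Finset.card_union_of_disjoint hd23, hi1, hi2, ht2]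
      ring
    calc Δ * T.card = ∑ a ∈ T, Δ := by rw [Finset.sum_const, smul_eq_mul, mul_comm]
      _ = ∑ a ∈ T, (univ.filter (fun f : E => a ∈ ends f)).card :=
          Finset.sum_congr rfl (fun a _ => (hdeg a).symm)
      _ = ∑ a ∈ T, ∑ f : E, (if a ∈ ends f then 1 else 0) :=
          Finset.sum_congr rfl (fun a _ => Finset.card_filter _ _)
      _ = ∑ f : E, ∑ a ∈ T, (if a ∈ ends f then 1 else 0) := Finset.sum_comm
      _ = ∑ f : E, (T.filter (fun a => a ∈ ends f)).card :=
          Finset.sum_congr rfl (fun f _ => (Finset.card_filter _ _).symm)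
      _ = ∑ f : E, ((if (∃ v ∈ ends f, v ∈ A ∪ B) then 1 else 0)
            + (if (∀ v ∈ ends f, v ∈ A ∪ B) then 1 else 0)) :=
          Finset.sum_congr rfl (fun f _ => perf f)
      _ = (univ.filter (fun f : E => ∃ v ∈ ends f, v ∈ A ∪ B)).card
            + (univ.filter (fun f : E => ∀ v ∈ ends f, v ∈ A ∪ B)).card := by
          rw [Finset.sum_add_distrib, ← Finset.card_filter, ← Finset.card_filter]
      _ = (i1 + i2 + t2) + Eab := by rw [hsplitQ, hEab]
  -- ### ncard conversions
  have hncM : Set.ncard M = m := by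
    rw [hM, ncard_setOf_eq_card_filter, hm]
  have hncEab : Set.ncard {f : E | ∀ v ∈ ends f, v ∈ A ∪ B} = Eab := by
    rw [ncard_setOf_eq_card_filter, hEab]
  have hncΛ : ∀ i : ℕ, Set.ncard (Λ i) = (T.filter (fun a => d a = i)).card := by
    intro i
    have hset : Λ i = {a : V | a ∈ A ∪ B ∧ d a = i} := by
      rw [hΛ]
      ext a
      simp only [Set.mem_setOf_eq, hd, ncard_setOf_eq_card_filter]
    rw [hset, ncard_setOf_eq_card_filter, hT, filter_filter]
  -- ### decomposition of lineSqDeg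
  have hF0 : lineSqDeg ends e = t1 + t2 := by
    rw [lineSqDeg, ncard_setOf_eq_card_filter]
    have hiff : ∀ f : E,
        (f ≠ e ∧ (Share ends e f ∨ ∃ g : E, Share ends e g ∧ Share ends g f)) ↔
        ((f ≠ e ∧ (u₁ ∈ ends f ∨ u₂ ∈ ends f)) ∨
          (u₁ ∉ ends f ∧ u₂ ∉ ends f ∧ ∃ v ∈ ends f, v ∈ A ∪ B)) := by
      intro f
      constructor
      · rintro ⟨hfe, h⟩
        by_cases htouch : u₁ ∈ ends f ∨ u₂ ∈ ends f
        · exact Or.inl ⟨hfe, htouch⟩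
        · push_neg at htouch
          refine Or.inr ⟨htouch.1, htouch.2, ?_⟩
          rcases h with ⟨v, hv1, hv2⟩ | ⟨g, ⟨v, hv1, hv2⟩, ⟨w, hw1, hw2⟩⟩
          · rw [he, Sym2.mem_iff] at hv1
            rcases hv1 with rfl | rfl
            · exact absurd hv2 htouch.1
            · exact absurd hv2 htouch.2
          · rw [he, Sym2.mem_iff] at hv1
            have hw1' : w ≠ u₁ := fun h => htouch.1 (h ▸ hw2)
            have hw2' : w ≠ u₂ := fun h => htouch.2 (h ▸ hw2)
            rcases hv1 with rfl | rfl
            · have hvw : v ≠ w := fun h => hw1' h.symm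
              have hg : ends g = s(v, w) := (Sym2.mem_and_mem_iff hvw).1 ⟨hv2, hw1⟩
              exact ⟨w, hw2, hmemA w g hw2' hg⟩
            · have hvw : v ≠ w := fun h => hw2' h.symm
              have hg : ends g = s(v, w) := (Sym2.mem_and_mem_iff hvw).1 ⟨hv2, hw1⟩
              exact ⟨w, hw2, hmemB w g hw1' hg⟩
      · rintro (⟨hfe, ht⟩ | ⟨h1, h2, v, hv, hvAB⟩)
        · refine ⟨hfe, Or.inl ?_⟩
          rcases ht with ht | ht
          · exact ⟨u₁, by rw [he]; simp, ht⟩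
          · exact ⟨u₂, by rw [he]; simp, ht⟩
        · have hfe : f ≠ e := by
            rintro rfl
            exact h1 (by rw [he]; simp)
          refine ⟨hfe, Or.inr ?_⟩
          rcases hvAB with hvA | hvB
          · rw [hA] at hvA
            obtain ⟨-, g, hg⟩ := hvA
            exact ⟨g, ⟨u₁, by rw [he]; simp, by rw [hg]; simp⟩, ⟨v, by rw [hg]; simp, hv⟩⟩
          · rw [hB] at hvB
            obtain ⟨-, g, hg⟩ := hvB
            exact ⟨g, ⟨u₂, by rw [he]; simp, by rw [hg]; simp⟩, ⟨v, by rw [hg]; simp, hv⟩⟩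
    have hd12 : Disjoint
        (univ.filter (fun f : E => f ≠ e ∧ (u₁ ∈ ends f ∨ u₂ ∈ ends f)))
        (univ.filter (fun f : E => u₁ ∉ ends f ∧ u₂ ∉ ends f ∧ ∃ v ∈ ends f, v ∈ A ∪ B)) := by
      rw [Finset.disjoint_left]
      intro f hf1 hf2
      simp only [mem_filter] at hf1 hf2
      rcases hf1.2.2 with h | h
      · exact hf2.2.1 h
      · exact hf2.2.2.1 h
    rw [Finset.filter_congr (fun f _ => hiff f), Finset.filter_or,
      Finset.card_union_of_disjoint hd12, ht1, ht2]
  -- ### sum arithmetic (Λ side)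
  have hE4 : (∑ i ∈ Finset.Icc 2 Δ, (i - 1) * Δ * (T.filter (fun a => d a = i)).card) + Δ * T.card
      = Δ * (∑ i ∈ Finset.Icc 1 Δ, i * (T.filter (fun a => d a = i)).card) := by
    have hins : Finset.Icc 1 Δ = insert 1 (Finset.Icc 2 Δ) := by
      ext j
      simp only [mem_Icc, mem_insert]
      omega
    have hnotmem : (1 : ℕ) ∉ Finset.Icc 2 Δ := by simp
    have key : ∀ i ∈ Finset.Icc 2 Δ,
        (i - 1) * Δ * (T.filter (fun a => d a = i)).card + Δ * (T.filter (fun a => d a = i)).card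
          = Δ * (i * (T.filter (fun a => d a = i)).card) := by
      intro i hi
      rw [mem_Icc] at hi
      obtain ⟨j, rfl⟩ : ∃ j, i = j + 1 := ⟨i - 1, by omega⟩
      simp only [Nat.add_sub_cancel]
      ring
    calc (∑ i ∈ Finset.Icc 2 Δ, (i - 1) * Δ * (T.filter (fun a => d a = i)).card) + Δ * T.card
        = (∑ i ∈ Finset.Icc 2 Δ, (i - 1) * Δ * (T.filter (fun a => d a = i)).card)
            + ∑ i ∈ Finset.Icc 1 Δ, Δ * (T.filter (fun a => d a = i)).card := by
          rw [hF5, Finset.mul_sum]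
      _ = Δ * (1 * (T.filter (fun a => d a = 1)).card)
            + ∑ i ∈ Finset.Icc 2 Δ, ((i - 1) * Δ * (T.filter (fun a => d a = i)).card
              + Δ * (T.filter (fun a => d a = i)).card) := by
          rw [hins, Finset.sum_insert hnotmem, Finset.sum_add_distrib]
          ring
      _ = Δ * (1 * (T.filter (fun a => d a = 1)).card)
            + ∑ i ∈ Finset.Icc 2 Δ, Δ * (i * (T.filter (fun a => d a = i)).card) := by
          rw [Finset.sum_congr rfl key]
      _ = Δ * (∑ i ∈ Finset.Icc 1 Δ, i * (T.filter (fun a => d a = i)).card) := by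
          rw [hins, Finset.sum_insert hnotmem, mul_add, Finset.mul_sum]
  -- ### final arithmetic
  rw [hF0, hncM, hncEab]
  have hrw : ∀ i ∈ Finset.Icc 2 Δ, (i - 1) * Δ * Set.ncard (Λ i) = (i - 1) * Δ * (T.filter (fun a => d a = i)).card := by
    intro i _
    rw [hncΛ i]
  rw [Finset.sum_congr rfl hrw]
  set S1 := ∑ i ∈ Finset.Icc 1 Δ, i * (T.filter (fun a => d a = i)).card with hS1
  set X := ∑ i ∈ Finset.Icc 2 Δ, (i - 1) * Δ * (T.filter (fun a => d a = i)).card with hX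
  set N := T.card with hN
  have hE2' : Δ * N = S1 + t2 + Eab := by
    rw [hE2, ← hF4, hF3]
  have hE3 : S1 + 2 * m + 2 = 2 * Δ := by
    rw [← hF4, hF3]
    omega
  have hE4' : X + Δ * N = Δ * S1 := hE4
  -- cast to ℤ
  have h2Δ : 1 ≤ 2 * Δ := by omega
  zify [hΔpos, h2Δ] at hE1 hE2' hE3 hE4' ⊢
  linear_combination hE1 - hE2' + ((Δ : ℤ) - 1) * hE3 + hE4'
end

section
/- Let Δ ≥ 2 and let F be a loopless multigraph with maximum degree at most Δ whose underlying simple graph F₀ is a blow-up of the five-cycle by stable sets A₁, …, A₅ of sizes a₁, …, a₅ (with A_i complete to A_{i+1} and A_{i-1}, indices mod 5, and all A_i stable and pairwise otherwise anticomplete). Then the number of edges of F (with multiplicity) is at most 5Δ²/4 if Δ is even, and at most (5Δ² − 2Δ + 1)/4 if Δ is odd. -/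
open Finset

private lemma cancel_pos {x y z : ℤ} (hx : 1 ≤ x) (h : x * y ≤ x * z) : y ≤ z :=
  le_of_mul_le_mul_left h (by linarith)

private lemma auxEmpty (Δ a1 a2 a3 a4 a5 b1 b2 b3 b4 b5 : ℤ)
    (ha1 : 0 ≤ a1) (ha2 : 0 ≤ a2) (ha4 : 0 ≤ a4) (ha5 : 0 ≤ a5)
    (d1 : b5 + b1 ≤ Δ * a1) (d2 : b1 + b2 ≤ Δ * a2) (d3 : b2 + b3 ≤ Δ * a3)
    (d4 : b3 + b4 ≤ Δ * a4) (d5 : b4 + b5 ≤ Δ * a5)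
    (l1 : a1 * a2 ≤ b1) (l2 : a2 * a3 ≤ b2) (l3 : a3 * a4 ≤ b3)
    (l4 : a4 * a5 ≤ b4) (l5 : a5 * a1 ≤ b5)
    (h0 : a3 = 0) :
    b1 + b2 + b3 + b4 + b5 ≤ Δ * Δ := by
  subst h0
  have hb2 : b2 = 0 := le_antisymm (by nlinarith) (by nlinarith)
  have hb3 : b3 = 0 := le_antisymm (by nlinarith) (by nlinarith)
  rcases le_or_gt 1 a5 with h5 | h5
  · have hb5 : 0 ≤ b5 := le_trans (by nlinarith) l5
    have hc : a4 + a1 ≤ Δ := cancel_pos h5 (by nlinarith)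
    have hΔ : 0 ≤ Δ := by linarith
    nlinarith [mul_nonneg hΔ (show (0:ℤ) ≤ Δ - a4 - a1 by linarith)]
  · have h5' : a5 = 0 := le_antisymm (by linarith) ha5
    subst h5'
    have hb4 : b4 = 0 := le_antisymm (by nlinarith) (by nlinarith)
    have hb5 : b5 = 0 := le_antisymm (by nlinarith) (by nlinarith)
    rcases le_or_gt 1 a2 with h2 | h2
    · have hc : a1 ≤ Δ := cancel_pos h2 (by nlinarith)
      have hΔ : 0 ≤ Δ := le_trans ha1 hc
      nlinarith [mul_nonneg hΔ (show (0:ℤ) ≤ Δ - a1 by linarith)]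
    · have h2' : a2 = 0 := le_antisymm (by linarith) ha2
      subst h2'
      have hb1 : b1 = 0 := le_antisymm (by nlinarith) (by nlinarith)
      nlinarith [mul_self_nonneg Δ]

private lemma auxTight (Δ a1 a2 a3 a4 a5 b1 b2 b3 b4 b5 : ℤ)
    (d1 : b5 + b1 ≤ Δ * a1) (d2 : b1 + b2 ≤ Δ * a2) (d3 : b2 + b3 ≤ Δ * a3)
    (d5 : b4 + b5 ≤ Δ * a5)
    (l1 : a1 * a2 ≤ b1) (l2 : a2 * a3 ≤ b2) (l5 : a5 * a1 ≤ b5)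
    (e1 : a5 + a2 = Δ) (e2 : a1 + a3 = Δ) (e3 : a2 + a4 = Δ)
    (e4 : a3 + a5 + 1 = Δ) (e5 : a4 + a1 = Δ) :
    4 * (b1 + b2 + b3 + b4 + b5) ≤ 5 * Δ ^ 2 - 2 * Δ + 1 := by
  have h2 : a2 = a1 := by linarith
  have h3 : a3 = a1 - 1 := by linarith
  have h5 : a5 = a1 - 1 := by linarith
  have h4 : a4 = a1 - 1 := by linarith
  have hD : Δ = 2 * a1 - 1 := by linarith
  subst h2 h3 h5 h4 hD
  nlinarith [d1, d2, d3, d5, l1, l2, l5]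

set_option maxHeartbeats 1000000 in
private lemma master (Δ a1 a2 a3 a4 a5 b1 b2 b3 b4 b5 : ℤ) (hΔ : 2 ≤ Δ)
    (ha1 : 0 ≤ a1) (ha2 : 0 ≤ a2) (ha3 : 0 ≤ a3) (ha4 : 0 ≤ a4) (ha5 : 0 ≤ a5)
    (d1 : b5 + b1 ≤ Δ * a1) (d2 : b1 + b2 ≤ Δ * a2) (d3 : b2 + b3 ≤ Δ * a3)
    (d4 : b3 + b4 ≤ Δ * a4) (d5 : b4 + b5 ≤ Δ * a5)
    (l1 : a1 * a2 ≤ b1) (l2 : a2 * a3 ≤ b2) (l3 : a3 * a4 ≤ b3)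
    (l4 : a4 * a5 ≤ b4) (l5 : a5 * a1 ≤ b5) :
    (Even Δ → 4 * (b1 + b2 + b3 + b4 + b5) ≤ 5 * Δ ^ 2) ∧
    (¬ Even Δ → 4 * (b1 + b2 + b3 + b4 + b5) ≤ 5 * Δ ^ 2 - 2 * Δ + 1) := by
  by_cases hz : a1 = 0 ∨ a2 = 0 ∨ a3 = 0 ∨ a4 = 0 ∨ a5 = 0
  · have hE : b1 + b2 + b3 + b4 + b5 ≤ Δ * Δ := by
      rcases hz with h | h | h | h | h
      · have := auxEmpty Δ a4 a5 a1 a2 a3 b4 b5 b1 b2 b3 ha4 ha5 ha2 ha3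
          d4 d5 d1 d2 d3 l4 l5 l1 l2 l3 h
        linarith
      · have := auxEmpty Δ a5 a1 a2 a3 a4 b5 b1 b2 b3 b4 ha5 ha1 ha3 ha4
          d5 d1 d2 d3 d4 l5 l1 l2 l3 l4 h
        linarith
      · exact auxEmpty Δ a1 a2 a3 a4 a5 b1 b2 b3 b4 b5 ha1 ha2 ha4 ha5
          d1 d2 d3 d4 d5 l1 l2 l3 l4 l5 h
      · have := auxEmpty Δ a2 a3 a4 a5 a1 b2 b3 b4 b5 b1 ha2 ha3 ha5 ha1
          d2 d3 d4 d5 d1 l2 l3 l4 l5 l1 h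
        linarith
      · have := auxEmpty Δ a3 a4 a5 a1 a2 b3 b4 b5 b1 b2 ha3 ha4 ha1 ha2
          d3 d4 d5 d1 d2 l3 l4 l5 l1 l2 h
        linarith
    constructor
    · intro _; nlinarith [sq_nonneg Δ]
    · intro _; nlinarith [sq_nonneg (Δ - 1)]
  · push_neg at hz
    obtain ⟨h1, h2, h3, h4, h5⟩ := hz
    have p1 : 1 ≤ a1 := by omega
    have p2 : 1 ≤ a2 := by omega
    have p3 : 1 ≤ a3 := by omega
    have p4 : 1 ≤ a4 := by omega
    have p5 : 1 ≤ a5 := by omega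
    have c1 : a5 + a2 ≤ Δ := cancel_pos p1 (by nlinarith)
    have c2 : a1 + a3 ≤ Δ := cancel_pos p2 (by nlinarith)
    have c3 : a2 + a4 ≤ Δ := cancel_pos p3 (by nlinarith)
    have c4 : a3 + a5 ≤ Δ := cancel_pos p4 (by nlinarith)
    have c5 : a4 + a1 ≤ Δ := cancel_pos p5 (by nlinarith)
    have hΔ0 : (0:ℤ) ≤ Δ := by linarith
    constructor
    · intro _
      have hS : 2 * (a1 + a2 + a3 + a4 + a5) ≤ 5 * Δ := by linarith
      have hmul := mul_le_mul_of_nonneg_left hS hΔ0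
      have hsum : 2 * (b1 + b2 + b3 + b4 + b5) ≤ Δ * (a1 + a2 + a3 + a4 + a5) := by
        have e : Δ * (a1 + a2 + a3 + a4 + a5) =
            Δ * a1 + Δ * a2 + Δ * a3 + Δ * a4 + Δ * a5 := by ring
        linarith [d1, d2, d3, d4, d5]
      nlinarith [hmul, hsum]
    · intro hodd
      have hodd' : Odd Δ := Int.not_even_iff_odd.mp hodd
      obtain ⟨k, hk⟩ := hodd'
      have hk1 : 1 ≤ k := by omega
      rcases (show a1 + a2 + a3 + a4 + a5 ≤ 5 * k + 1 ∨
          a1 + a2 + a3 + a4 + a5 = 5 * k + 2 by omega) with h | h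
      · have hmul := mul_le_mul_of_nonneg_left h hΔ0
        have hsum : 2 * (b1 + b2 + b3 + b4 + b5) ≤ Δ * (a1 + a2 + a3 + a4 + a5) := by
          have e : Δ * (a1 + a2 + a3 + a4 + a5) =
              Δ * a1 + Δ * a2 + Δ * a3 + Δ * a4 + Δ * a5 := by ring
          linarith [d1, d2, d3, d4, d5]
        subst hk
        linarith [hmul, hsum, hk1]
      · have hcase : (a5 + a2 + 1 = Δ ∧ a1 + a3 = Δ ∧ a2 + a4 = Δ ∧ a3 + a5 = Δ ∧ a4 + a1 = Δ) ∨
            (a5 + a2 = Δ ∧ a1 + a3 + 1 = Δ ∧ a2 + a4 = Δ ∧ a3 + a5 = Δ ∧ a4 + a1 = Δ) ∨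
            (a5 + a2 = Δ ∧ a1 + a3 = Δ ∧ a2 + a4 + 1 = Δ ∧ a3 + a5 = Δ ∧ a4 + a1 = Δ) ∨
            (a5 + a2 = Δ ∧ a1 + a3 = Δ ∧ a2 + a4 = Δ ∧ a3 + a5 + 1 = Δ ∧ a4 + a1 = Δ) ∨
            (a5 + a2 = Δ ∧ a1 + a3 = Δ ∧ a2 + a4 = Δ ∧ a3 + a5 = Δ ∧ a4 + a1 + 1 = Δ) := by
          omega
        rcases hcase with ⟨e1, e2, e3, e4, e5⟩ | ⟨e1, e2, e3, e4, e5⟩ | ⟨e1, e2, e3, e4, e5⟩ |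
          ⟨e1, e2, e3, e4, e5⟩ | ⟨e1, e2, e3, e4, e5⟩
        · -- slack at class 1 : rotate t=2, a' = (a3,a4,a5,a1,a2)
          have := auxTight Δ a3 a4 a5 a1 a2 b3 b4 b5 b1 b2
            d3 d4 d5 d2 l3 l4 l2 e3 e4 e5 e1 e2
          linarith
        · -- slack at class 2 : a' = (a4,a5,a1,a2,a3)
          have := auxTight Δ a4 a5 a1 a2 a3 b4 b5 b1 b2 b3
            d4 d5 d1 d3 l4 l5 l3 e4 e5 e1 e2 e3
          linarith
        · -- slack at class 3 : a' = (a5,a1,a2,a3,a4)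
          have := auxTight Δ a5 a1 a2 a3 a4 b5 b1 b2 b3 b4
            d5 d1 d2 d4 l5 l1 l4 e5 e1 e2 e3 e4
          linarith
        · exact auxTight Δ a1 a2 a3 a4 a5 b1 b2 b3 b4 b5
            d1 d2 d3 d5 l1 l2 l5 e1 e2 e3 e4 e5
        · -- slack at class 5 : a' = (a2,a3,a4,a5,a1)
          have := auxTight Δ a2 a3 a4 a5 a1 b2 b3 b4 b5 b1
            d2 d3 d4 d1 l2 l3 l1 e2 e3 e4 e5 e1
          linarith

theorem stmt_14 {V : Type*} [Fintype V] [DecidableEq V]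
    (Δ : ℕ) (hΔ : 2 ≤ Δ)
    (m : V → V → ℕ) (hsymm : ∀ u v, m u v = m v u) (hloopless : ∀ v, m v v = 0)
    (hdeg : ∀ v : V, ∑ u : V, m v u ≤ Δ)
    (A : Fin 5 → Finset V)
    (hpart : ∀ v : V, ∃! i : Fin 5, v ∈ A i)
    (hblowup : ∀ (i j : Fin 5) (u v : V), u ∈ A i → v ∈ A j →
      (m u v ≠ 0 ↔ (j = i + 1 ∨ i = j + 1))) :
    -- `∑ u, ∑ v, m u v` counts every edge twice :
    (Even Δ → 2 * (∑ u : V, ∑ v : V, m u v) ≤ 5 * Δ ^ 2) ∧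
    (¬Even Δ → 2 * (∑ u : V, ∑ v : V, m u v) ≤ 5 * Δ ^ 2 - 2 * Δ + 1) := by
  classical
  set B : Fin 5 → Fin 5 → ℕ := fun i j => ∑ u ∈ A i, ∑ v ∈ A j, m u v with hBdef
  have hpartsum : ∀ f : V → ℕ, ∑ u, f u = ∑ i : Fin 5, ∑ u ∈ A i, f u := by
    intro f
    calc ∑ u, f u = ∑ u : V, ∑ i : Fin 5, if u ∈ A i then f u else 0 := by
          refine Finset.sum_congr rfl fun u _ => ?_
          obtain ⟨i0, hi0, hu⟩ := hpart u
          rw [Finset.sum_eq_single i0]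
          · simp [hi0]
          · intro j _ hj
            simp only [ite_eq_right_iff]
            intro hmem; exact absurd (hu j hmem) hj
          · intro h; exact absurd (mem_univ i0) h
      _ = ∑ i : Fin 5, ∑ u : V, if u ∈ A i then f u else 0 := Finset.sum_comm
      _ = ∑ i : Fin 5, ∑ u ∈ A i, f u := by
          refine Finset.sum_congr rfl fun i _ => ?_
          rw [Finset.sum_ite_mem, Finset.univ_inter]
  have hBzero : ∀ i j : Fin 5, ¬(j = i + 1 ∨ i = j + 1) → B i j = 0 := by
    intro i j hij
    refine Finset.sum_eq_zero fun u hu => Finset.sum_eq_zero fun v hv => ?_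
    by_contra hm
    exact hij ((hblowup i j u v hu hv).mp hm)
  have hBsymm : ∀ i j : Fin 5, B i j = B j i := by
    intro i j
    rw [hBdef]
    dsimp only
    rw [Finset.sum_comm]
    exact Finset.sum_congr rfl fun v _ => Finset.sum_congr rfl fun u _ => hsymm u v
  have hT : ∑ u : V, ∑ v : V, m u v = 2 * (B 0 1 + B 1 2 + B 2 3 + B 3 4 + B 4 0) := by
    rw [hpartsum (fun u => ∑ v, m u v)]
    have step : ∀ i : Fin 5, ∑ u ∈ A i, ∑ v : V, m u v = ∑ j : Fin 5, B i j := by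
      intro i
      calc ∑ u ∈ A i, ∑ v : V, m u v
          = ∑ u ∈ A i, ∑ j : Fin 5, ∑ v ∈ A j, m u v :=
            Finset.sum_congr rfl fun u _ => hpartsum _
        _ = ∑ j : Fin 5, B i j := Finset.sum_comm
    simp only [step]
    rw [Fin.sum_univ_five]
    simp only [Fin.sum_univ_five]
    rw [hBzero 0 0 (by decide), hBzero 0 2 (by decide), hBzero 0 3 (by decide),
        hBzero 1 1 (by decide), hBzero 1 3 (by decide), hBzero 1 4 (by decide),
        hBzero 2 2 (by decide), hBzero 2 4 (by decide), hBzero 2 0 (by decide),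
        hBzero 3 3 (by decide), hBzero 3 0 (by decide), hBzero 3 1 (by decide),
        hBzero 4 4 (by decide), hBzero 4 1 (by decide), hBzero 4 2 (by decide),
        hBsymm 1 0, hBsymm 2 1, hBsymm 3 2, hBsymm 4 3, hBsymm 0 4]
    ring
  have hne : ∀ i : Fin 5, (i - 1 : Fin 5) ≠ i + 1 := by decide
  have hd : ∀ i : Fin 5, B (i-1) i + B i (i+1) ≤ Δ * (A i).card := by
    intro i
    have hdisj : Disjoint (A (i-1)) (A (i+1)) := by
      rw [Finset.disjoint_left]
      intro x hx1 hx2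
      obtain ⟨i0, _, hu⟩ := hpart x
      exact hne i ((hu _ hx1).trans (hu _ hx2).symm)
    have h1 : B (i-1) i = ∑ v ∈ A i, ∑ u ∈ A (i-1), m v u := by
      rw [hBdef]; dsimp only
      rw [Finset.sum_comm]
      exact Finset.sum_congr rfl fun v _ => Finset.sum_congr rfl fun u _ => hsymm u v
    have h2 : B i (i+1) = ∑ v ∈ A i, ∑ u ∈ A (i+1), m v u := rfl
    rw [h1, h2, ← Finset.sum_add_distrib]
    calc ∑ v ∈ A i, (∑ u ∈ A (i-1), m v u + ∑ u ∈ A (i+1), m v u)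
        = ∑ v ∈ A i, ∑ u ∈ A (i-1) ∪ A (i+1), m v u := by
          exact Finset.sum_congr rfl fun v _ => (Finset.sum_union hdisj).symm
      _ ≤ ∑ v ∈ A i, ∑ u : V, m v u :=
          Finset.sum_le_sum fun v _ =>
            Finset.sum_le_sum_of_subset (Finset.subset_univ _)
      _ ≤ ∑ _v ∈ A i, Δ := Finset.sum_le_sum fun v _ => hdeg v
      _ = Δ * (A i).card := by rw [Finset.sum_const, smul_eq_mul, mul_comm]
  have hl : ∀ i : Fin 5, (A i).card * (A (i+1)).card ≤ B i (i+1) := by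
    intro i
    have : (A i).card * (A (i+1)).card = ∑ u ∈ A i, ∑ _v ∈ A (i+1), 1 := by
      simp [Finset.sum_const, mul_comm]
    rw [this]
    exact Finset.sum_le_sum fun u hu => Finset.sum_le_sum fun v hv =>
      Nat.one_le_iff_ne_zero.mpr ((hblowup i (i+1) u v hu hv).mpr (Or.inl rfl))
  -- instantiate
  have d1 := hd 0; have d2 := hd 1; have d3 := hd 2; have d4 := hd 3; have d5 := hd 4
  rw [show ((0:Fin 5) - 1) = 4 from by decide, show ((0:Fin 5) + 1) = 1 from by decide] at d1
  rw [show ((1:Fin 5) - 1) = 0 from by decide, show ((1:Fin 5) + 1) = 2 from by decide] at d2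
  rw [show ((2:Fin 5) - 1) = 1 from by decide, show ((2:Fin 5) + 1) = 3 from by decide] at d3
  rw [show ((3:Fin 5) - 1) = 2 from by decide, show ((3:Fin 5) + 1) = 4 from by decide] at d4
  rw [show ((4:Fin 5) - 1) = 3 from by decide, show ((4:Fin 5) + 1) = 0 from by decide] at d5
  have l1 := hl 0; have l2 := hl 1; have l3 := hl 2; have l4 := hl 3; have l5 := hl 4
  rw [show ((0:Fin 5) + 1) = 1 from by decide] at l1
  rw [show ((1:Fin 5) + 1) = 2 from by decide] at l2
  rw [show ((2:Fin 5) + 1) = 3 from by decide] at l3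
  rw [show ((3:Fin 5) + 1) = 4 from by decide] at l4
  rw [show ((4:Fin 5) + 1) = 0 from by decide] at l5
  obtain ⟨hev, hod⟩ := master (Δ : ℤ)
    ((A 0).card : ℤ) ((A 1).card : ℤ) ((A 2).card : ℤ) ((A 3).card : ℤ) ((A 4).card : ℤ)
    (B 0 1 : ℤ) (B 1 2 : ℤ) (B 2 3 : ℤ) (B 3 4 : ℤ) (B 4 0 : ℤ)
    (by exact_mod_cast hΔ)
    (Int.natCast_nonneg _) (Int.natCast_nonneg _) (Int.natCast_nonneg _)
    (Int.natCast_nonneg _) (Int.natCast_nonneg _)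
    (by exact_mod_cast d1) (by exact_mod_cast d2) (by exact_mod_cast d3)
    (by exact_mod_cast d4) (by exact_mod_cast d5)
    (by exact_mod_cast l1) (by exact_mod_cast l2) (by exact_mod_cast l3)
    (by exact_mod_cast l4) (by exact_mod_cast l5)
  constructor
  · intro h
    have h' := hev (by exact_mod_cast h)
    rw [hT]
    zify
    push_cast at h' ⊢
    linarith
  · intro h
    have h' := hod (by rw [Int.even_coe_nat]; exact h)
    rw [hT]
    have hsub : 2 * Δ ≤ 5 * Δ ^ 2 := by nlinarith
    zify [hsub]
    push_cast at h' ⊢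
    linarith
end

section
/- Let Δ ≥ 5 and p ≥ 5. Let F be a multigraph of maximum degree at most Δ containing a clique K of size p in its underlying simple graph, such that every other vertex (in a set Y) has a neighbor in K, (p−1)|E(Y)| ≤ Σ_{e ∈ E(Y)} w(e), the number of edges from K to Y is at most pΔ − 2|E(K)|, and Σ_{e ∈ E(Y)} w(e) ≤ (pΔ − 2|E(K)|)(Δ − 1). Then the total number of edges satisfies |E| ≤ pΔ − |E(K)| + (Δ−1)(pΔ − 2|E(K)|)/(p−1), and consequently |E| < (p/(p−1))Δ² − p(p−3)/2, which for p ≥ 5 is less than 5Δ²/4 − 5. -/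
open Finset

set_option maxHeartbeats 1600000 in
theorem stmt_17 {V E : Type*} [Fintype V] [Fintype E] [DecidableEq V] [DecidableEq E]
    (ends : E → Sym2 V) (hloopless : ∀ e : E, ¬(ends e).IsDiag)
    (p Δ : ℕ) (hp : 5 ≤ p) (hΔ : 5 ≤ Δ)
    (hdeg : ∀ v : V, Set.ncard {e : E | v ∈ ends e} ≤ Δ)
    (K : Finset V) (hKcard : K.card = p)
    (hclique : ∀ u ∈ K, ∀ v ∈ K, u ≠ v → ∃ e : E, ends e = s(u, v))
    (hY : ∀ v : V, v ∉ K → ∃ (e : E) (u : V), u ∈ K ∧ ends e = s(v, u))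
    (EK EY : Finset E)
    (hEK : ∀ e : E, e ∈ EK ↔ ∀ v ∈ ends e, v ∈ K)
    (hEY : ∀ e : E, e ∈ EY ↔ ∀ v ∈ ends e, v ∉ K)
    (w : E → ℕ)
    (hw : ∀ (e : E) (y₁ y₂ : V), ends e = s(y₁, y₂) →
      w e = Set.ncard {f : E | ∃ u ∈ K, ends f = s(y₁, u)} +
            Set.ncard {f : E | ∃ u ∈ K, ends f = s(y₂, u)})
    (hEKbig : p.choose 2 ≤ EK.card)
    (hcut : (EK ∪ EY)ᶜ.card + 2 * EK.card ≤ p * Δ)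
    (hclaim0 : (p - 1) * EY.card ≤ ∑ e ∈ EY, w e)
    (hsumw : ∑ e ∈ EY, w e ≤ (p * Δ - 2 * EK.card) * (Δ - 1)) :
    (Fintype.card E : ℝ) ≤
        (p : ℝ) * Δ - EK.card + ((Δ : ℝ) - 1) * ((p : ℝ) * Δ - 2 * EK.card) / ((p : ℝ) - 1) ∧
      (Fintype.card E : ℝ) < (p : ℝ) / ((p : ℝ) - 1) * (Δ : ℝ) ^ 2 - (p : ℝ) * ((p : ℝ) - 3) / 2 ∧
      (Fintype.card E : ℝ) < 5 * (Δ : ℝ) ^ 2 / 4 - 5 := by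
  classical
  -- disjointness of EK and EY
  have hdisj : Disjoint EK EY := by
    rw [Finset.disjoint_left]
    intro e heK heY
    obtain ⟨⟨a, b⟩, hab⟩ := (ends e).exists_rep
    have ha : a ∈ ends e := by rw [← hab]; exact Sym2.mem_mk_left a b
    exact (hEY e).1 heY a ha ((hEK e).1 heK a ha)
  -- total count
  have hcard : Fintype.card E = EK.card + EY.card + (EK ∪ EY)ᶜ.card := by
    have := Finset.card_add_card_compl (EK ∪ EY)
    rw [Finset.card_union_of_disjoint hdisj] at this
    omega
  set k := EK.card with hk
  set y := EY.card with hy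
  set c := (EK ∪ EY)ᶜ.card with hc
  -- 2k ≤ pΔ
  have h2k : 2 * k ≤ p * Δ := by omega
  -- p(p-1) ≤ 2k in ℕ
  have hkb : p * (p - 1) ≤ 2 * k := by
    have h2 : p.choose 2 = p * (p - 1) / 2 := Nat.choose_two_right p
    have heven : 2 ∣ p * (p - 1) := by
      rcases Nat.even_or_odd p with h | h
      · exact Dvd.dvd.mul_right h.two_dvd _
      · exact Dvd.dvd.mul_left (Nat.Odd.sub_odd h odd_one).two_dvd _
    omega
  -- real versions
  have hP : (5 : ℝ) ≤ (p : ℝ) := by exact_mod_cast hp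
  have hD : (5 : ℝ) ≤ (Δ : ℝ) := by exact_mod_cast hΔ
  have hP1 : (0 : ℝ) < (p : ℝ) - 1 := by linarith
  have hkbR : (p : ℝ) * ((p : ℝ) - 1) ≤ 2 * (k : ℝ) := by
    have : ((p * (p - 1) : ℕ) : ℝ) ≤ ((2 * k : ℕ) : ℝ) := by exact_mod_cast hkb
    push_cast [Nat.cast_sub (by omega : 1 ≤ p)] at this
    linarith
  have hcR : (c : ℝ) + 2 * (k : ℝ) ≤ (p : ℝ) * (Δ : ℝ) := by
    have : ((c + 2 * k : ℕ) : ℝ) ≤ ((p * Δ : ℕ) : ℝ) := by exact_mod_cast hcut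
    push_cast at this; linarith
  have hyR : ((p : ℝ) - 1) * (y : ℝ) ≤ ((Δ : ℝ) - 1) * ((p : ℝ) * (Δ : ℝ) - 2 * (k : ℝ)) := by
    have h1 : ((p - 1) * y : ℕ) ≤ ((p * Δ - 2 * k) * (Δ - 1) : ℕ) := le_trans hclaim0 hsumw
    have := (Nat.cast_le (α := ℝ)).2 h1
    push_cast [Nat.cast_sub (by omega : 1 ≤ p), Nat.cast_sub (by omega : 1 ≤ Δ),
      Nat.cast_sub h2k] at this
    linarith
  have hcardR : (Fintype.card E : ℝ) = (k : ℝ) + (y : ℝ) + (c : ℝ) := by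
    rw [hcard]; push_cast; ring
  -- y bound with division
  have hydiv : (y : ℝ) ≤ ((Δ : ℝ) - 1) * ((p : ℝ) * (Δ : ℝ) - 2 * (k : ℝ)) / ((p : ℝ) - 1) := by
    rw [le_div_iff₀ hP1]; linarith [hyR]
  have goal1 : (Fintype.card E : ℝ) ≤
      (p : ℝ) * Δ - k + ((Δ : ℝ) - 1) * ((p : ℝ) * Δ - 2 * k) / ((p : ℝ) - 1) := by
    rw [hcardR]; linarith
  have e1 : ((Δ : ℝ) - 1) * ((p : ℝ) * Δ - 2 * k) / ((p : ℝ) - 1) * ((p : ℝ) - 1)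
      = ((Δ : ℝ) - 1) * ((p : ℝ) * Δ - 2 * k) := div_mul_cancel₀ _ hP1.ne'
  have e2 : (p : ℝ) / ((p : ℝ) - 1) * ((p : ℝ) - 1) = (p : ℝ) := div_mul_cancel₀ _ hP1.ne'
  have goal2 : (p : ℝ) * Δ - k + ((Δ : ℝ) - 1) * ((p : ℝ) * Δ - 2 * k) / ((p : ℝ) - 1)
      < (p : ℝ) / ((p : ℝ) - 1) * (Δ : ℝ) ^ 2 - (p : ℝ) * ((p : ℝ) - 3) / 2 := by
    nlinarith [e1, e2, hP1, hkbR, hP, hD, mul_pos hP1 (by linarith : (0:ℝ) < (Δ:ℝ) - 1),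
      mul_nonneg (by linarith : (0:ℝ) ≤ 2 * (k:ℝ) - (p:ℝ) * ((p:ℝ) - 1))
        (by linarith : (0:ℝ) ≤ (p:ℝ) - 1 + 2 * ((Δ:ℝ) - 1))]
  have hQ : (p : ℝ) / ((p : ℝ) - 1) ≤ 5 / 4 := by
    rw [div_le_iff₀ hP1]; linarith
  have goal3 : (p : ℝ) / ((p : ℝ) - 1) * (Δ : ℝ) ^ 2 - (p : ℝ) * ((p : ℝ) - 3) / 2
      ≤ 5 * (Δ : ℝ) ^ 2 / 4 - 5 := by
    have h1 : (p : ℝ) / ((p : ℝ) - 1) * (Δ : ℝ) ^ 2 ≤ 5 / 4 * (Δ : ℝ) ^ 2 :=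
      mul_le_mul_of_nonneg_right hQ (sq_nonneg _)
    have h2 : (5 : ℝ) ≤ (p : ℝ) * ((p : ℝ) - 3) / 2 := by nlinarith [hP]
    linarith
  exact ⟨goal1, lt_of_le_of_lt goal1 goal2, lt_of_le_of_lt goal1 (lt_of_lt_of_le goal2 goal3)⟩
end
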